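/- arXiv:1909.10927 — 3 statements merged into one kernel-verified Lean document; each statement's English description precedes it below -/
import Mathlib

section
/- Let π be a Hecke path of shape λ with respect to the local chamber C_x (λ spherical, λ in the closure of C_f^v). If t ∈ (0,1) is a folding point of π, i.e. π′_−(t) ≠ π′_+(t), then there exist β ∈ Φ and k ∈ ℤ with β(π(t)) + k = 0, β(π′_−(t)) ≠ 0, and (β(x) + k)·β(π′_−(t)) ≥ 0; in particular, every folding point of π occurs among the finitely many pairs (wall, time) of this kind, so π has only finitely many folding points. -/
open scoped Pointwise

/-- A Kac–Moody root datum: free families of roots `root : I → V*` and coroots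
`coroot : I → V` whose pairing matrix is a generalized Cartan matrix. -/
structure KMDatum (V I : Type*) [AddCommGroup V] [Module ℝ V] where
  root : I → (V →ₗ[ℝ] ℝ)
  coroot : I → V
  indep_root : LinearIndependent ℝ root
  indep_coroot : LinearIndependent ℝ coroot
  isInt : ∀ i j, ∃ n : ℤ, root j (coroot i) = (n : ℝ)
  diag : ∀ i, root i (coroot i) = 2
  offdiag : ∀ i j, i ≠ j → root j (coroot i) ≤ 0
  zero_iff : ∀ i j, root j (coroot i) = 0 ↔ root i (coroot j) = 0

namespace KMDatum

variable {V I : Type*} [AddCommGroup V] [Module ℝ V] (D : KMDatum V I)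

/-- The fundamental reflection `r_i : v ↦ v - α_i(v)·α_i^∨`. -/
noncomputable def refl (i : I) : V ≃ₗ[ℝ] V := Module.reflection (D.diag i)

/-- The vectorial Weyl group `W^v`, generated by the fundamental reflections. -/
noncomputable def Wv : Subgroup (V ≃ₗ[ℝ] V) := Subgroup.closure (Set.range D.refl)

/-- The set of real roots `Φ = W^v · {α_i}`, where `(w·α)(v) = α(w⁻¹ v)`. -/
noncomputable def Phi : Set (V →ₗ[ℝ] ℝ) :=
  {β | ∃ w ∈ D.Wv, ∃ i, β = (D.root i).comp (w.symm : V ≃ₗ[ℝ] V).toLinearMap}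

/-- The fundamental open vectorial chamber `C_f^v`. -/
def Cf : Set V := {v | ∀ i, 0 < D.root i v}

/-- The closure of the fundamental chamber, `{v | α_i(v) ≥ 0 ∀ i}`. -/
def CfCl : Set V := {v | ∀ i, 0 ≤ D.root i v}

/-- The vectorial face `F^v(J)`. -/
def Face (J : Set I) : Set V := {v | (∀ i ∈ J, D.root i v = 0) ∧ ∀ i ∉ J, 0 < D.root i v}

/-- `J ⊆ I` is spherical if the subgroup generated by `{r_i : i ∈ J}` is finite. -/
noncomputable def Spherical (J : Set I) : Prop :=
  ((Subgroup.closure (D.refl '' J) : Subgroup (V ≃ₗ[ℝ] V)) : Set (V ≃ₗ[ℝ] V)).Finite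

/-- The Tits cone `𝒯 = ⋃_{w ∈ W^v} w·(closure of C_f^v)`. -/
noncomputable def TitsCone : Set V := ⋃ w ∈ D.Wv, ⇑w '' D.CfCl

/-- The open Tits cone `𝒯°`, the union of the spherical positive vectorial faces. -/
noncomputable def OpenTitsCone : Set V :=
  ⋃ w ∈ D.Wv, ⋃ J ∈ {J : Set I | D.Spherical J}, ⇑w '' D.Face J

/-- `V_0 = F^v(I) = {v | α_i(v) = 0 ∀ i}`. -/
def V0 : Set V := {v | ∀ i, D.root i v = 0}

end KMDatum
/-- A (piecewise-linear, continuous) `λ`-path `π : [0,1] → V`, with prescribed one-sided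
derivative values `dplus t = π′₊(t)` and `dminus t = π′₋(t)`, all lying in the orbit `W^v·λ`. -/
noncomputable def KMDatum.IsLambdaPath {V I : Type*} [AddCommGroup V] [Module ℝ V]
    [TopologicalSpace V] (D : KMDatum V I) (lam : V) (π dplus dminus : ℝ → V) : Prop :=
  ContinuousOn π (Set.Icc (0 : ℝ) 1) ∧
  (∀ t : ℝ, 0 ≤ t → t < 1 →
    (∃ w ∈ D.Wv, dplus t = w lam) ∧
    ∃ ε > (0 : ℝ), ∀ s : ℝ, t ≤ s → s ≤ t + ε → s ≤ 1 →
      π s = π t + (s - t) • dplus t) ∧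
  (∀ t : ℝ, 0 < t → t ≤ 1 →
    (∃ w ∈ D.Wv, dminus t = w lam) ∧
    ∃ ε > (0 : ℝ), ∀ s : ℝ, t - ε ≤ s → s ≤ t → 0 ≤ s →
      π s = π t + (s - t) • dminus t)
/-- A Hecke path of shape `lam` with respect to the local chamber `C_x` with vertex `x` and
direction `Cxv`. Here `Dv t` is the direction of the projection `pr_{π(t)}(C_x)`, characterized
by: `x' − π(t) ∈ Dv t` for all `x' ∈ x + Cxv` sufficiently close to `x`. -/
noncomputable def KMDatum.IsHeckePath {V I : Type*} [AddCommGroup V] [Module ℝ V]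
    [TopologicalSpace V] (D : KMDatum V I) (lam x : V) (Cxv : Set V)
    (π dplus dminus : ℝ → V) (Dv : ℝ → Set V) : Prop :=
  D.IsLambdaPath lam π dplus dminus ∧
  (∀ t : ℝ, 0 ≤ t → t ≤ 1 → π t - x ∈ D.OpenTitsCone) ∧
  (∀ t : ℝ, 0 ≤ t → t ≤ 1 →
    (∃ w ∈ D.Wv, Dv t = ⇑w '' D.Cf) ∧
    ∀ v ∈ Cxv, ∃ ε > (0 : ℝ), ∀ c : ℝ, 0 < c → c < ε → (x + c • v) - π t ∈ Dv t) ∧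
  (∀ t : ℝ, 0 < t → t < 1 →
    ∃ (s : ℕ) (ξ : ℕ → V) (β : ℕ → (V →ₗ[ℝ] ℝ)),
      ξ 0 = dminus t ∧ ξ s = dplus t ∧
      ∀ j : ℕ, j < s →
        (∃ w ∈ D.Wv, ∃ i : I,
          β j = (D.root i).comp (w.symm : V ≃ₗ[ℝ] V).toLinearMap ∧
          ξ (j + 1) = ξ j - (β j) (ξ j) • (w (D.coroot i))) ∧
        β j (ξ j) < 0 ∧
        (∃ k : ℤ, β j (π t) = (k : ℝ)) ∧
        (∀ v ∈ Dv t, β j v < 0))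

/-- A finite linearly independent family of functionals on a finite-dimensional real vector
space admits a common "dual" vector on which they all take the value `1`. -/
private lemma KMDatum.exists_forall_eq_one {V : Type*} {I : Type*} [AddCommGroup V] [Module ℝ V]
    [FiniteDimensional ℝ V] [Fintype I] (root : I → (V →ₗ[ℝ] ℝ))
    (h : LinearIndependent ℝ root) : ∃ v : V, ∀ i, root i v = 1 := by
  classical
  have hsurj : Function.Surjective (LinearMap.pi root : V →ₗ[ℝ] (I → ℝ)) := by
    rw [← LinearMap.range_eq_top]
    by_contra hn
    obtain ⟨f, hf0, hf⟩ := Submodule.exists_dual_map_eq_bot_of_lt_top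
      (lt_top_iff_ne_top.mpr hn) inferInstance
    have hker : ∀ v : V, f (LinearMap.pi root v) = 0 := by
      intro v
      have hmem : f (LinearMap.pi root v) ∈
          (LinearMap.range (LinearMap.pi root : V →ₗ[ℝ] (I → ℝ))).map f :=
        Submodule.mem_map_of_mem (LinearMap.mem_range_self _ v)
      rw [hf] at hmem
      simpa using hmem
    have hdecomp : ∀ y : I → ℝ, f y = ∑ i, y i * f ((Pi.single i 1 : I → ℝ)) := by
      intro y
      have hy : y = ∑ i, y i • (Pi.single i 1 : I → ℝ) := by
        funext j
        simp [Finset.sum_apply, Pi.single_apply, mul_comm]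
      conv_lhs => rw [hy]
      simp [map_sum]
    have hcoef : ∀ i, f ((Pi.single i 1 : I → ℝ)) = 0 := by
      have hsum : ∑ i, f ((Pi.single i 1 : I → ℝ)) • root i = 0 := by
        apply LinearMap.ext
        intro v
        have := hker v
        rw [hdecomp (LinearMap.pi root v)] at this
        simpa [LinearMap.pi_apply, mul_comm] using this
      exact Fintype.linearIndependent_iff.mp h _ hsum
    apply hf0
    apply LinearMap.ext
    intro y
    simp [hdecomp y, hcoef]
  obtain ⟨v, hv⟩ := hsurj (fun _ => 1)
  exact ⟨v, fun i => by have := congrFun hv i; simpa [LinearMap.pi_apply] using this⟩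


set_option maxHeartbeats 1000000 in
/-- at every folding point `t ∈ (0,1)` of a Hecke path (of spherical shape `lam`),
there is a wall `M(β,k)` through `π(t)` not containing the backward germ, with `x` not strictly
on the same side as the backward germ; consequently there are only finitely many folding
points. -/
theorem heckePath_folding_points_conditions_and_finite
    {V I : Type*} [AddCommGroup V] [Module ℝ V] [FiniteDimensional ℝ V]
    [TopologicalSpace V] [IsTopologicalAddGroup V] [ContinuousSMul ℝ V] [T2Space V]
    [Fintype I] (D : KMDatum V I)
    (lam : V) (hlam : lam ∈ D.CfCl) (hsph : lam ∈ D.OpenTitsCone)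
    (x : V) (u : V ≃ₗ[ℝ] V) (hu : u ∈ D.Wv)
    (π dplus dminus : ℝ → V) (Dv : ℝ → Set V)
    (hH : D.IsHeckePath lam x (⇑u '' D.Cf) π dplus dminus Dv) :
    (∀ t : ℝ, 0 < t → t < 1 → dminus t ≠ dplus t →
      ∃ β ∈ D.Phi, ∃ k : ℤ,
        β (π t) + (k : ℝ) = 0 ∧ β (dminus t) ≠ 0 ∧
        0 ≤ (β x + (k : ℝ)) * β (dminus t)) ∧
    Set.Finite {t : ℝ | 0 < t ∧ t < 1 ∧ dminus t ≠ dplus t} := by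
  obtain ⟨hpath, hopen, hproj, hfold⟩ := hH
  obtain ⟨hcont, hplus, hminus⟩ := hpath
  obtain ⟨v0, hv0⟩ := KMDatum.exists_forall_eq_one D.root D.indep_root
  have hv0Cf : v0 ∈ D.Cf := fun i => by rw [hv0]; norm_num
  constructor
  · -- Part 1: the wall conditions at a folding point
    intro t ht0 ht1 hne
    obtain ⟨s, ξ, β, hξ0, hξs, hall⟩ := hfold t ht0 ht1
    have hs : 0 < s := by
      rcases Nat.eq_zero_or_pos s with h | h
      · rw [h] at hξs; exact absurd (hξ0.symm.trans hξs) hne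
      · exact h
    obtain ⟨⟨w, hw, i, hβ, hξ1⟩, hneg, ⟨k, hk⟩, hDvneg⟩ := hall 0 hs
    rw [hξ0] at hneg
    refine ⟨β 0, ⟨w, hw, i, hβ⟩, -k, ?_, ?_, ?_⟩
    · push_cast; rw [hk]; ring
    · exact ne_of_lt hneg
    · obtain ⟨εd, hεd, hc⟩ := (hproj t ht0.le ht1.le).2 (u v0) ⟨v0, hv0Cf, rfl⟩
      have key : ∀ c : ℝ, 0 < c → c < εd →
          β 0 (x - π t) + c * β 0 (u v0) < 0 := by
        intro c hc1 hc2
        have hmem := hDvneg _ (hc c hc1 hc2)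
        have heq : β 0 ((x + c • (u v0)) - π t) = β 0 (x - π t) + c * β 0 (u v0) := by
          rw [map_sub, map_add, map_smul, map_sub]; simp [smul_eq_mul]; ring
        linarith [heq ▸ hmem]
      have hle : β 0 (x - π t) ≤ 0 := by
        by_contra hpos
        push_neg at hpos
        set A := β 0 (x - π t) with hA
        set B := β 0 (u v0) with hB
        set c := min (εd / 2) (A / (2 * (|B| + 1))) with hcdef
        have hcpos : 0 < c := lt_min (by linarith) (by positivity)
        have hclt : c < εd := lt_of_le_of_lt (min_le_left _ _) (by linarith)
        have h1 := key c hcpos hclt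
        have hBle : -B ≤ |B| := neg_le_abs B
        have hc2 : c ≤ A / (2 * (|B| + 1)) := min_le_right _ _
        have habs : (0:ℝ) ≤ |B| := abs_nonneg B
        have hM : (0:ℝ) < 2 * (|B| + 1) := by positivity
        have h3 : c * (2 * (|B| + 1)) ≤ A := (le_div_iff₀ hM).mp hc2
        nlinarith [h3, mul_le_mul_of_nonneg_left hBle hcpos.le]
      have hkx : β 0 x + ((-k : ℤ) : ℝ) = β 0 (x - π t) := by
        push_cast; rw [map_sub, hk]; ring
      rw [hkx]
      nlinarith [hle, hneg]
  · -- Part 2: finiteness of the set of folding points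
    have key : ∀ a : ℝ, ∃ δ > 0, ∀ t : ℝ, 0 < t → t < 1 → |t - a| < δ → t ≠ a →
        dminus t = dplus t := by
      intro a
      rcases lt_or_ge a 0 with ha | ha
      · refine ⟨-a, by linarith, fun t ht0 _ habs _ => ?_⟩
        exact absurd (abs_lt.mp habs).2 (by linarith)
      rcases lt_or_ge 1 a with ha1 | ha1
      · refine ⟨a - 1, by linarith, fun t _ ht1 habs _ => ?_⟩
        exact absurd (abs_lt.mp habs).1 (by linarith)
      -- main case : 0 ≤ a ≤ 1
      have hR : ∃ εR > (0:ℝ), ∀ t, a < t → t < a + εR → 0 < t → t < 1 →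
          dminus t = dplus t := by
        rcases lt_or_ge a 1 with halt | halt
        · obtain ⟨-, εR, hεR, hlin⟩ := hplus a ha halt
          refine ⟨εR, hεR, fun t hat htε ht0 ht1 => ?_⟩
          obtain ⟨-, εt, hεt, hlt⟩ := hplus t ht0.le ht1
          obtain ⟨-, ηt, hηt, hmt⟩ := hminus t ht0 ht1.le
          have e3 : π t = π a + (t - a) • dplus a := hlin t hat.le htε.le ht1.le
          -- forward : dplus t = dplus a
          have hplus_eq : dplus t = dplus a := by
            set s1 := min (t + εt) (min (a + εR) 1) with hs1
            have hs1t : t < s1 := lt_min (by linarith) (lt_min htε ht1)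
            have hs1a : s1 ≤ a + εR := le_trans (min_le_right _ _) (min_le_left _ _)
            have hs11 : s1 ≤ 1 := le_trans (min_le_right _ _) (min_le_right _ _)
            have e1 : π s1 = π t + (s1 - t) • dplus t :=
              hlt s1 hs1t.le (min_le_left _ _) hs11
            have e2 : π s1 = π a + (s1 - a) • dplus a :=
              hlin s1 (by linarith) hs1a hs11
            have hsub : (s1 - t) • dplus t = (s1 - t) • dplus a := by
              have h12 : π t + (s1 - t) • dplus t = π a + (s1 - a) • dplus a :=
                e1 ▸ e2 ▸ rfl
              rw [e3, add_assoc] at h12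
              have hcanc : (t - a) • dplus a + (s1 - t) • dplus t = (s1 - a) • dplus a :=
                add_left_cancel h12
              rw [eq_sub_of_add_eq' hcanc, ← sub_smul]
              congr 1
              ring
            exact smul_right_injective V (by intro h; linarith [sub_eq_zero.mp h] : s1 - t ≠ 0) hsub
          -- backward : dminus t = dplus a
          have hminus_eq : dminus t = dplus a := by
            set s2 := max (t - ηt) a with hs2
            have hs2t : s2 < t := max_lt (by linarith) hat
            have e4 : π s2 = π t + (s2 - t) • dminus t :=
              hmt s2 (le_max_left _ _) hs2t.le (le_trans ha (le_max_right _ _))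
            have e5 : π s2 = π a + (s2 - a) • dplus a :=
              hlin s2 (le_max_right _ _) (by linarith) (by linarith)
            have hsub : (s2 - t) • dminus t = (s2 - t) • dplus a := by
              have h45 : π t + (s2 - t) • dminus t = π a + (s2 - a) • dplus a :=
                e4 ▸ e5 ▸ rfl
              rw [e3, add_assoc] at h45
              have hcanc : (t - a) • dplus a + (s2 - t) • dminus t = (s2 - a) • dplus a :=
                add_left_cancel h45
              rw [eq_sub_of_add_eq' hcanc, ← sub_smul]
              congr 1
              ring
            exact smul_right_injective V (by intro h; linarith [sub_eq_zero.mp h] : s2 - t ≠ 0) hsub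
          rw [hplus_eq, hminus_eq]
        · exact ⟨1, one_pos, fun t hat _ _ ht1 => absurd hat (by linarith)⟩
      have hL : ∃ εL > (0:ℝ), ∀ t, a - εL < t → t < a → 0 < t → t < 1 →
          dminus t = dplus t := by
        rcases lt_or_ge 0 a with ha0 | ha0
        · obtain ⟨-, εL, hεL, hlin⟩ := hminus a ha0 ha1
          refine ⟨εL, hεL, fun t htε hta ht0 ht1 => ?_⟩
          obtain ⟨-, εt, hεt, hlt⟩ := hplus t ht0.le ht1
          obtain ⟨-, ηt, hηt, hmt⟩ := hminus t ht0 ht1.le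
          have e3 : π t = π a + (t - a) • dminus a := hlin t htε.le hta.le ht0.le
          have hplus_eq : dplus t = dminus a := by
            set s1 := min (t + εt) a with hs1
            have hs1t : t < s1 := lt_min (by linarith) hta
            have e1 : π s1 = π t + (s1 - t) • dplus t :=
              hlt s1 hs1t.le (min_le_left _ _) (by linarith [min_le_right (t + εt) a])
            have e2 : π s1 = π a + (s1 - a) • dminus a :=
              hlin s1 (by linarith) (min_le_right _ _) (by linarith)
            have hsub : (s1 - t) • dplus t = (s1 - t) • dminus a := by
              have h12 : π t + (s1 - t) • dplus t = π a + (s1 - a) • dminus a :=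
                e1 ▸ e2 ▸ rfl
              rw [e3, add_assoc] at h12
              have hcanc : (t - a) • dminus a + (s1 - t) • dplus t = (s1 - a) • dminus a :=
                add_left_cancel h12
              rw [eq_sub_of_add_eq' hcanc, ← sub_smul]
              congr 1
              ring
            exact smul_right_injective V (by intro h; linarith [sub_eq_zero.mp h] : s1 - t ≠ 0) hsub
          have hminus_eq : dminus t = dminus a := by
            set s2 := max (t - ηt) (max (a - εL) 0) with hs2
            have hs2t : s2 < t := max_lt (by linarith) (max_lt (by linarith) ht0)
            have hs20 : (0:ℝ) ≤ s2 := le_trans (le_max_right _ _) (le_max_right _ _)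
            have e4 : π s2 = π t + (s2 - t) • dminus t :=
              hmt s2 (le_max_left _ _) hs2t.le hs20
            have e5 : π s2 = π a + (s2 - a) • dminus a :=
              hlin s2 (le_trans (le_max_left _ _) (le_max_right _ _)) (by linarith) hs20
            have hsub : (s2 - t) • dminus t = (s2 - t) • dminus a := by
              have h45 : π t + (s2 - t) • dminus t = π a + (s2 - a) • dminus a :=
                e4 ▸ e5 ▸ rfl
              rw [e3, add_assoc] at h45
              have hcanc : (t - a) • dminus a + (s2 - t) • dminus t = (s2 - a) • dminus a :=
                add_left_cancel h45
              rw [eq_sub_of_add_eq' hcanc, ← sub_smul]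
              congr 1
              ring
            exact smul_right_injective V (by intro h; linarith [sub_eq_zero.mp h] : s2 - t ≠ 0) hsub
          rw [hplus_eq, hminus_eq]
        · exact ⟨1, one_pos, fun t _ hta ht0 _ => absurd hta (by linarith)⟩
      obtain ⟨εR, hεR, hRt⟩ := hR
      obtain ⟨εL, hεL, hLt⟩ := hL
      refine ⟨min εR εL, lt_min hεR hεL, fun t ht0 ht1 habs htne => ?_⟩
      have h1 := (abs_lt.mp habs).1
      have h2 := (abs_lt.mp habs).2
      have hminR : min εR εL ≤ εR := min_le_left _ _
      have hminL : min εR εL ≤ εL := min_le_right _ _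
      rcases lt_or_gt_of_ne htne with h | h
      · exact hLt t (by linarith) h ht0 ht1
      · exact hRt t h (by linarith) ht0 ht1
    choose δ hδpos hkey using key
    obtain ⟨F, hF⟩ := (isCompact_Icc (a := (0:ℝ)) (b := 1)).elim_finite_subcover
      (fun a => Set.Ioo (a - δ a) (a + δ a)) (fun a => isOpen_Ioo)
      (fun t _ => Set.mem_iUnion.mpr ⟨t, ⟨by linarith [hδpos t], by linarith [hδpos t]⟩⟩)
    apply Set.Finite.subset F.finite_toSet
    rintro t ⟨ht0, ht1, htne⟩
    have hmem : t ∈ ⋃ a ∈ F, Set.Ioo (a - δ a) (a + δ a) := hF ⟨ht0.le, ht1.le⟩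
    obtain ⟨a, haF, hta⟩ := Set.mem_iUnion₂.mp hmem
    rcases eq_or_ne t a with rfl | hne2
    · exact haF
    · exact absurd
        (hkey a t ht0 ht1 (abs_lt.mpr ⟨by linarith [hta.1], by linarith [hta.2]⟩) hne2) htne
end

section
/- Let C_z and C_y be positive local chambers of type 0 in the apartment V with z <° y, let μ ∈ Y^+ be spherical (μ ∈ 𝒯°) and v ∈ W^v; set C_z^+ = pr_z(C_y) and C_y'' = pr_y(C_z^+). Then d^W(C_z^+, C_y) = τ_{μ^{++}}·w_{v^{−1}·μ} if and only if d^W(C_z^+, y) = μ^{++} and d^{*W}(C_y'', C_y) = w_{μ^{++}}^+·w_{v^{−1}·μ}. -/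
open scoped Pointwise

/-- The coweight lattice condition `Q^∨ ⊆ Y ⊆ P^∨`. -/
noncomputable def KMDatum.Ycond {V I : Type*} [AddCommGroup V] [Module ℝ V] (D : KMDatum V I)
    (Y : AddSubgroup V) : Prop :=
  (AddSubgroup.closure (Set.range D.coroot) : Set V) ⊆ (Y : Set V) ∧
  (Y : Set V) ⊆ {v | ∀ β ∈ D.Phi, ∃ n : ℤ, β v = (n : ℝ)}

/-- The word length of `w` with respect to the generators `r_i` of `W^v`. -/
noncomputable def KMDatum.len {V I : Type*} [AddCommGroup V] [Module ℝ V] (D : KMDatum V I)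
    (w : V ≃ₗ[ℝ] V) : ℕ :=
  sInf {n : ℕ | ∃ l : List I, l.length = n ∧ (l.map D.refl).prod = w}

/-- `IsPrNeg x u z e` : the negative local chamber `(z, e)` (i.e. the germ at `z` of
`z - e·C_f^v`) is the projection `pr_z` of the positive local chamber `(x, u)`:
`x' - z ∈ -e·C_f^v` for all `x' ∈ x + u·C_f^v` sufficiently near `x`. -/
noncomputable def KMDatum.IsPrNeg {V I : Type*} [AddCommGroup V] [Module ℝ V]
    (D : KMDatum V I) (x : V) (u : V ≃ₗ[ℝ] V) (z : V) (e : V ≃ₗ[ℝ] V) : Prop :=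
  ∀ v ∈ ⇑u '' D.Cf, ∃ ε > (0 : ℝ), ∀ t : ℝ, 0 < t → t < ε →
    -((x + t • v) - z) ∈ ⇑e '' D.Cf

/-- `IsPrPos y d z c` : the positive local chamber `(z, c)` is the projection `pr_z` of the
positive local chamber `(y, d)`: `y' - z ∈ c·C_f^v` for all `y' ∈ y + d·C_f^v`
sufficiently near `y`. -/
noncomputable def KMDatum.IsPrPos {V I : Type*} [AddCommGroup V] [Module ℝ V]
    (D : KMDatum V I) (y : V) (d : V ≃ₗ[ℝ] V) (z : V) (c : V ≃ₗ[ℝ] V) : Prop :=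
  ∀ v ∈ ⇑d '' D.Cf, ∃ ε > (0 : ℝ), ∀ t : ℝ, 0 < t → t < ε →
    ((y + t • v) - z) ∈ ⇑c '' D.Cf
/- ===== auxiliary development ===== -/

namespace KMDatum
variable {V I : Type*} [AddCommGroup V] [Module ℝ V] (D : KMDatum V I)

-- basics
lemma mul_apply (f g : V ≃ₗ[ℝ] V) (v : V) : (f * g) v = f (g v) := rfl

lemma inv_apply (f : V ≃ₗ[ℝ] V) (v : V) : (f⁻¹) v = f.symm v := rfl

lemma one_apply (v : V) : (1 : V ≃ₗ[ℝ] V) v = v := rfl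

lemma refl_apply (i : I) (v : V) : D.refl i v = v - D.root i v • D.coroot i := by
  unfold KMDatum.refl; rw [Module.reflection_apply]

lemma refl_mul_self (i : I) : D.refl i * D.refl i = 1 := by
  ext v
  rw [mul_apply]
  exact Module.involutive_reflection (D.diag i) v

lemma refl_inv (i : I) : (D.refl i)⁻¹ = D.refl i :=
  inv_eq_of_mul_eq_one_right (D.refl_mul_self i)

lemma refl_mem_Wv (i : I) : D.refl i ∈ D.Wv :=
  Subgroup.subset_closure ⟨i, rfl⟩

lemma root_comp_refl_self (i : I) (v : V) : D.root i (D.refl i v) = - D.root i v := by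
  rw [refl_apply, map_sub, map_smul, D.diag i, smul_eq_mul]; ring

lemma root_comp_refl (k i : I) (v : V) :
    D.root k (D.refl i v) = D.root k v - D.root i v * D.root k (D.coroot i) := by
  rw [refl_apply, map_sub, map_smul, smul_eq_mul]

lemma coroot_ne_zero (i : I) : D.coroot i ≠ 0 := by
  intro h
  have := D.diag i
  rw [h, map_zero] at this
  norm_num at this

lemma refl_ne_one (i : I) : D.refl i ≠ 1 := by
  intro h
  have h2 : D.refl i (D.coroot i) = D.coroot i := by rw [h]; rfl
  rw [refl_apply, D.diag i] at h2
  have : (2 : ℝ) • D.coroot i = 0 := by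
    have := sub_eq_iff_eq_add.mp h2
    rw [two_smul]
    abel_nf
    abel_nf at this
    linear_combination (norm := module) -this
  exact D.coroot_ne_zero i (by
    have := smul_eq_zero.mp this
    rcases this with h | h
    · norm_num at h
    · exact h)

-- words
lemma exists_word {w : V ≃ₗ[ℝ] V} (hw : w ∈ D.Wv) :
    ∃ l : List I, (l.map D.refl).prod = w := by
  induction hw using Subgroup.closure_induction with
  | mem x hx => obtain ⟨i, rfl⟩ := hx; exact ⟨[i], by simp⟩
  | one => exact ⟨[], by simp⟩
  | mul x y _ _ hx hy =>
    obtain ⟨l1, hl1⟩ := hx; obtain ⟨l2, hl2⟩ := hy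
    exact ⟨l1 ++ l2, by rw [List.map_append, List.prod_append, hl1, hl2]⟩
  | inv x _ hx =>
    obtain ⟨l, hl⟩ := hx
    refine ⟨l.reverse, ?_⟩
    rw [← hl]
    clear hl
    induction l with
    | nil => simp
    | cons a t ih =>
      rw [List.map_cons, List.prod_cons, List.reverse_cons, List.map_append, List.prod_append,
        ih, mul_inv_rev]
      simp [D.refl_inv a]

lemma word_mem_Wv (l : List I) : (l.map D.refl).prod ∈ D.Wv := by
  induction l with
  | nil => simp
  | cons a t ih => rw [List.map_cons, List.prod_cons]; exact D.Wv.mul_mem (D.refl_mem_Wv a) ih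

end KMDatum

namespace KMDatum
variable {V I : Type*} [AddCommGroup V] [Module ℝ V] (D : KMDatum V I)

lemma word_reverse_prod (l : List I) :
    ((l.reverse.map D.refl).prod) = ((l.map D.refl).prod)⁻¹ := by
  induction l with
  | nil => simp
  | cons a t ih =>
    rw [List.map_cons, List.prod_cons, List.reverse_cons, List.map_append, List.prod_append,
      ih, mul_inv_rev]
    simp [D.refl_inv a]

lemma len_le_of_word {w : V ≃ₗ[ℝ] V} {l : List I} (h : (l.map D.refl).prod = w) :
    D.len w ≤ l.length :=
  Nat.sInf_le ⟨l, rfl, h⟩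

lemma len_spec {w : V ≃ₗ[ℝ] V} (hw : w ∈ D.Wv) :
    ∃ l : List I, l.length = D.len w ∧ (l.map D.refl).prod = w := by
  have hne : {n : ℕ | ∃ l : List I, l.length = n ∧ (l.map D.refl).prod = w}.Nonempty := by
    obtain ⟨l, hl⟩ := D.exists_word hw
    exact ⟨l.length, l, rfl, hl⟩
  exact Nat.sInf_mem hne

lemma len_one : D.len (1 : V ≃ₗ[ℝ] V) = 0 :=
  Nat.le_zero.mp (D.len_le_of_word (l := []) (by simp))

lemma eq_one_of_len_eq_zero {w : V ≃ₗ[ℝ] V} (hw : w ∈ D.Wv) (h : D.len w = 0) : w = 1 := by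
  obtain ⟨l, hl, hp⟩ := D.len_spec hw
  rw [h, List.length_eq_zero_iff] at hl
  rw [hl] at hp
  simpa using hp.symm

lemma len_inv {w : V ≃ₗ[ℝ] V} (hw : w ∈ D.Wv) : D.len w⁻¹ = D.len w := by
  have key : ∀ u : V ≃ₗ[ℝ] V, u ∈ D.Wv → D.len u⁻¹ ≤ D.len u := by
    intro u hu
    obtain ⟨l, hl, hp⟩ := D.len_spec hu
    have : ((l.reverse.map D.refl).prod) = u⁻¹ := by rw [D.word_reverse_prod, hp]
    calc D.len u⁻¹ ≤ l.reverse.length := D.len_le_of_word this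
    _ = D.len u := by rw [List.length_reverse, hl]
  refine le_antisymm (key w hw) ?_
  have := key w⁻¹ (D.Wv.inv_mem hw)
  rwa [inv_inv] at this

lemma len_mul_le {w w' : V ≃ₗ[ℝ] V} (hw : w ∈ D.Wv) (hw' : w' ∈ D.Wv) :
    D.len (w * w') ≤ D.len w + D.len w' := by
  obtain ⟨l, hl, hp⟩ := D.len_spec hw
  obtain ⟨l', hl', hp'⟩ := D.len_spec hw'
  have : ((l ++ l').map D.refl).prod = w * w' := by
    rw [List.map_append, List.prod_append, hp, hp']
  calc D.len (w * w') ≤ (l ++ l').length := D.len_le_of_word this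
  _ = _ := by rw [List.length_append, hl, hl']

lemma len_refl (i : I) : D.len (D.refl i) = 1 := by
  refine le_antisymm (D.len_le_of_word (l := [i]) (by simp)) ?_
  by_contra h
  push_neg at h
  have h0 : D.len (D.refl i) = 0 := by omega
  exact D.refl_ne_one i (D.eq_one_of_len_eq_zero (D.refl_mem_Wv i) h0)

lemma len_mul_refl_le (w : V ≃ₗ[ℝ] V) (hw : w ∈ D.Wv) (i : I) :
    D.len (w * D.refl i) ≤ D.len w + 1 := by
  have := D.len_mul_le hw (D.refl_mem_Wv i)
  rwa [D.len_refl i] at this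

lemma len_le_len_mul_refl_add_one (w : V ≃ₗ[ℝ] V) (hw : w ∈ D.Wv) (i : I) :
    D.len w ≤ D.len (w * D.refl i) + 1 := by
  have h1 : w * D.refl i * D.refl i = w := by
    rw [mul_assoc, D.refl_mul_self, mul_one]
  have := D.len_mul_refl_le (w * D.refl i) (D.Wv.mul_mem hw (D.refl_mem_Wv i)) i
  rwa [h1] at this

/-- if `w ≠ 1`, a minimal word is nonempty, and stripping the last letter gives
`len (w * refl j) = len w - 1`. -/
lemma exists_last_letter {w : V ≃ₗ[ℝ] V} (hw : w ∈ D.Wv) (hne : w ≠ 1) :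
    ∃ j : I, D.len (w * D.refl j) + 1 = D.len w := by
  obtain ⟨l, hl, hp⟩ := D.len_spec hw
  cases hl' : l.reverse with
  | nil =>
    exfalso
    have : l = [] := by simpa using congrArg List.reverse hl'
    rw [this] at hp
    exact hne (by simpa using hp.symm)
  | cons j t =>
    refine ⟨j, ?_⟩
    have hl2 : l = t.reverse ++ [j] := by
      have := congrArg List.reverse hl'
      simpa using this
    have hprod : w * D.refl j = ((t.reverse).map D.refl).prod := by
      rw [← hp, hl2, List.map_append, List.prod_append]
      simp [mul_assoc, D.refl_mul_self]
    have hle : D.len (w * D.refl j) ≤ t.reverse.length := D.len_le_of_word hprod.symm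
    have hlen : l.length = t.reverse.length + 1 := by rw [hl2]; simp
    have hge := D.len_le_len_mul_refl_add_one w hw j
    omega

end KMDatum

namespace KMDatum
variable {V I : Type*} [AddCommGroup V] [Module ℝ V] (D : KMDatum V I)

section Dihedral
variable (i j : I)

/-- letters: `true ↦ i`, `false ↦ j`. -/
def bletter : Bool → I := fun b => if b then i else j

noncomputable def prodB (l : List Bool) : V ≃ₗ[ℝ] V :=
  ((l.map (bletter i j)).map D.refl).prod

lemma prodB_nil : D.prodB i j [] = 1 := by simp [prodB]

lemma prodB_cons (b : Bool) (l : List Bool) :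
    D.prodB i j (b :: l) = D.refl (bletter i j b) * D.prodB i j l := by
  simp [prodB]

lemma prodB_append (l l' : List Bool) :
    D.prodB i j (l ++ l') = D.prodB i j l * D.prodB i j l' := by
  simp [prodB, List.prod_append]

lemma prodB_singleton (b : Bool) : D.prodB i j [b] = D.refl (bletter i j b) := by
  simp [prodB]

lemma prodB_mem_Wv (l : List Bool) : D.prodB i j l ∈ D.Wv := D.word_mem_Wv _

noncomputable def len2 (x : V ≃ₗ[ℝ] V) : ℕ :=
  sInf {n : ℕ | ∃ l : List Bool, l.length = n ∧ D.prodB i j l = x}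

lemma len2_le_of_word {x : V ≃ₗ[ℝ] V} {l : List Bool} (h : D.prodB i j l = x) :
    D.len2 i j x ≤ l.length :=
  Nat.sInf_le ⟨l, rfl, h⟩

lemma len2_spec {x : V ≃ₗ[ℝ] V} (hx : ∃ l : List Bool, D.prodB i j l = x) :
    ∃ l : List Bool, l.length = D.len2 i j x ∧ D.prodB i j l = x := by
  obtain ⟨l, hl⟩ := hx
  have hne : {n : ℕ | ∃ l : List Bool, l.length = n ∧ D.prodB i j l = x}.Nonempty :=
    ⟨l.length, l, rfl, hl⟩
  exact Nat.sInf_mem hne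

lemma len_le_len2 {x : V ≃ₗ[ℝ] V} (hx : ∃ l : List Bool, D.prodB i j l = x) :
    D.len x ≤ D.len2 i j x := by
  obtain ⟨l, hl, hp⟩ := D.len2_spec i j hx
  have : ((l.map (bletter i j)).map D.refl).prod = x := hp
  calc D.len x ≤ ((l.map (bletter i j))).length := D.len_le_of_word this
  _ = _ := by rw [List.length_map, hl]

lemma len2_mul_single_le {x : V ≃ₗ[ℝ] V} (hx : ∃ l : List Bool, D.prodB i j l = x) (b : Bool) :
    D.len2 i j (x * D.refl (bletter i j b)) ≤ D.len2 i j x + 1 := by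
  obtain ⟨l, hl, hp⟩ := D.len2_spec i j hx
  have : D.prodB i j (l ++ [b]) = x * D.refl (bletter i j b) := by
    rw [prodB_append, hp, prodB_singleton]
  calc D.len2 i j _ ≤ (l ++ [b]).length := D.len2_le_of_word i j this
  _ = _ := by simp [hl]

lemma len2_single_mul_le {x : V ≃ₗ[ℝ] V} (hx : ∃ l : List Bool, D.prodB i j l = x) (b : Bool) :
    D.len2 i j (D.refl (bletter i j b) * x) ≤ D.len2 i j x + 1 := by
  obtain ⟨l, hl, hp⟩ := D.len2_spec i j hx
  have : D.prodB i j (b :: l) = D.refl (bletter i j b) * x := by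
    rw [prodB_cons, hp]
  calc D.len2 i j _ ≤ (b :: l).length := D.len2_le_of_word i j this
  _ = _ := by simp [hl]

lemma eq_one_of_len2_eq_zero {x : V ≃ₗ[ℝ] V} (hx : ∃ l : List Bool, D.prodB i j l = x)
    (h : D.len2 i j x = 0) : x = 1 := by
  obtain ⟨l, hl, hp⟩ := D.len2_spec i j hx
  rw [h, List.length_eq_zero_iff] at hl
  rw [hl, prodB_nil] at hp
  exact hp.symm

/-- The pair `(aT m, aS m)` of alternating products of length `m`,
`aT` ending (on the right) with `refl j`, `aS` ending with `refl i`. -/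
noncomputable def ats : ℕ → (V ≃ₗ[ℝ] V) × (V ≃ₗ[ℝ] V)
  | 0 => (1, 1)
  | m + 1 => ((ats m).2 * D.refl j, (ats m).1 * D.refl i)

noncomputable def aT (m : ℕ) : V ≃ₗ[ℝ] V := (D.ats i j m).1
noncomputable def aS (m : ℕ) : V ≃ₗ[ℝ] V := (D.ats i j m).2

lemma aT_zero : D.aT i j 0 = 1 := rfl
lemma aS_zero : D.aS i j 0 = 1 := rfl
lemma aT_succ (m : ℕ) : D.aT i j (m + 1) = D.aS i j m * D.refl j := by
  rw [aT, aS, ats]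
lemma aS_succ (m : ℕ) : D.aS i j (m + 1) = D.aT i j m * D.refl i := by
  rw [aS, aT, ats]

lemma aT_succ_mul (m : ℕ) : D.aT i j (m + 1) * D.refl j = D.aS i j m := by
  rw [aT_succ, mul_assoc, D.refl_mul_self, mul_one]
lemma aS_succ_mul (m : ℕ) : D.aS i j (m + 1) * D.refl i = D.aT i j m := by
  rw [aS_succ, mul_assoc, D.refl_mul_self, mul_one]

lemma aT_word (m : ℕ) : (∃ l : List Bool, l.length = m ∧ D.prodB i j l = D.aT i j m) ∧
    (∃ l : List Bool, l.length = m ∧ D.prodB i j l = D.aS i j m) := by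
  induction m with
  | zero => exact ⟨⟨[], rfl, by rw [prodB_nil, aT_zero]⟩, ⟨[], rfl, by rw [prodB_nil, aS_zero]⟩⟩
  | succ m ih =>
    obtain ⟨⟨lT, hlT, hpT⟩, ⟨lS, hlS, hpS⟩⟩ := ih
    constructor
    · refine ⟨lS ++ [false], by simp [hlS], ?_⟩
      rw [prodB_append, hpS, prodB_singleton, aT_succ]
      rfl
    · refine ⟨lT ++ [true], by simp [hlT], ?_⟩
      rw [prodB_append, hpT, prodB_singleton, aS_succ]
      rfl

lemma len2_aT_le (m : ℕ) : D.len2 i j (D.aT i j m) ≤ m := by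
  obtain ⟨l, hl, hp⟩ := (D.aT_word i j m).1
  calc D.len2 i j _ ≤ l.length := D.len2_le_of_word i j hp
  _ = m := hl

lemma len2_aS_le (m : ℕ) : D.len2 i j (D.aS i j m) ≤ m := by
  obtain ⟨l, hl, hp⟩ := (D.aT_word i j m).2
  calc D.len2 i j _ ≤ l.length := D.len2_le_of_word i j hp
  _ = m := hl

/-- normal form: every dihedral word's product is some `aT m` or `aS m` with `m ≤ length`. -/
lemma prodB_normal_form (l : List Bool) :
    ∃ m, m ≤ l.length ∧ (D.prodB i j l = D.aT i j m ∨ D.prodB i j l = D.aS i j m) := by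
  induction l using List.reverseRecOn with
  | nil => exact ⟨0, le_refl _, Or.inl (by rw [prodB_nil, aT_zero])⟩
  | append_singleton l b ih =>
    obtain ⟨m, hm, h | h⟩ := ih <;> rw [prodB_append, h, prodB_singleton] <;> cases b
    · -- aT m * refl j
      cases m with
      | zero => exact ⟨1, by simp, Or.inl (by rw [aT_zero, one_mul, aT_succ, aS_zero, one_mul]; rfl)⟩
      | succ m' => exact ⟨m', by simp at hm ⊢; omega, Or.inr (by rw [show (bletter i j false) = j from rfl, aT_succ_mul]
          )⟩
    · -- aT m * refl i = aS (m+1)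
      exact ⟨m + 1, by simp; omega, Or.inr (by rw [aS_succ]; rfl)⟩
    · -- aS m * refl j = aT (m+1)
      exact ⟨m + 1, by simp; omega, Or.inl (by rw [aT_succ]; rfl)⟩
    · -- aS m * refl i
      cases m with
      | zero => exact ⟨1, by simp, Or.inr (by rw [aS_zero, one_mul, aS_succ, aT_zero, one_mul]; rfl)⟩
      | succ m' => exact ⟨m', by simp at hm ⊢; omega, Or.inl (by rw [show (bletter i j true) = i from rfl, aS_succ_mul])⟩

end Dihedral
end KMDatum

namespace KMDatum

/-- coefficient step for the dihedral root recursion -/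
def dstep (a b : ℝ) : Bool → ℝ × ℝ → ℝ × ℝ := fun f p =>
  if f then (p.1, -p.2 - b * p.1) else (-p.1 - a * p.2, p.2)

def diter (a b : ℝ) : ℕ → Bool → ℝ × ℝ → ℝ × ℝ
  | 0, _, p => p
  | m + 1, f, p => diter a b m (!f) (dstep a b f p)

lemma diter_zero (a b : ℝ) (f : Bool) (p : ℝ × ℝ) : diter a b 0 f p = p := rfl

lemma diter_succ (a b : ℝ) (m : ℕ) (f : Bool) (p : ℝ × ℝ) :
    diter a b (m + 1) f p = diter a b m (!f) (dstep a b f p) := rfl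

def dinv (a b : ℝ) : Bool → ℝ × ℝ → Prop := fun f p =>
  0 ≤ p.1 ∧ 0 ≤ p.2 ∧ (if f then 2 * p.2 ≤ -b * p.1 else 2 * p.1 ≤ -a * p.2)

lemma dinv_step {a b : ℝ} (ha : a ≤ 0) (hb : b ≤ 0) (h4 : 4 ≤ a * b) (f : Bool) (p : ℝ × ℝ)
    (h : dinv a b f p) : dinv a b (!f) (dstep a b f p) := by
  obtain ⟨hx, hy, hf⟩ := h
  cases f <;> simp only [dstep, dinv, Bool.not_true, Bool.not_false, if_true, if_false,
    Bool.false_eq_true, Bool.true_eq_false] at hf ⊢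
  · -- f = false : apply the σ-step
    refine ⟨by nlinarith, hy, ?_⟩
    nlinarith [mul_nonneg hy (neg_nonneg.mpr hb)]
  · -- f = true : apply the τ-step
    refine ⟨hx, by nlinarith, ?_⟩
    nlinarith [mul_nonneg hx (neg_nonneg.mpr ha)]

lemma diter_nonneg {a b : ℝ} (ha : a ≤ 0) (hb : b ≤ 0) (h4 : 4 ≤ a * b) (m : ℕ) :
    ∀ (f : Bool) (p : ℝ × ℝ), dinv a b f p →
      0 ≤ (diter a b m f p).1 ∧ 0 ≤ (diter a b m f p).2 := by
  induction m with
  | zero => intro f p h; exact ⟨h.1, h.2.1⟩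
  | succ m ih =>
    intro f p h
    rw [diter_succ]
    exact ih (!f) _ (dinv_step ha hb h4 f p h)

end KMDatum

namespace KMDatum
variable {V I : Type*} [AddCommGroup V] [Module ℝ V] (D : KMDatum V I)

section DihedralRoots
variable (i j : I)

/-- the linear functional `p.1 • α_i + p.2 • α_j`. -/
noncomputable def combo (p : ℝ × ℝ) : V →ₗ[ℝ] ℝ := p.1 • D.root i + p.2 • D.root j

lemma combo_apply (p : ℝ × ℝ) (v : V) :
    D.combo i j p v = p.1 * D.root i v + p.2 * D.root j v := by
  simp [combo]

lemma coe_mul_eq_comp (x y : V ≃ₗ[ℝ] V) :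
    ((x * y : V ≃ₗ[ℝ] V) : V →ₗ[ℝ] V) = (x : V →ₗ[ℝ] V).comp (y : V →ₗ[ℝ] V) := rfl

lemma combo_comp_refl_j (p : ℝ × ℝ) :
    (D.combo i j p).comp (D.refl j : V →ₗ[ℝ] V)
      = D.combo i j (dstep (D.root j (D.coroot i)) (D.root i (D.coroot j)) true p) := by
  ext v
  simp only [LinearMap.comp_apply, combo_apply, dstep, if_true, LinearEquiv.coe_coe]
  rw [D.root_comp_refl i j, D.root_comp_refl_self j]
  ring

lemma combo_comp_refl_i (p : ℝ × ℝ) :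
    (D.combo i j p).comp (D.refl i : V →ₗ[ℝ] V)
      = D.combo i j (dstep (D.root j (D.coroot i)) (D.root i (D.coroot j)) false p) := by
  ext v
  simp only [LinearMap.comp_apply, combo_apply, dstep, if_false, LinearEquiv.coe_coe,
    Bool.false_eq_true]
  rw [D.root_comp_refl j i, D.root_comp_refl_self i]
  ring

lemma combo_comp_inv (m : ℕ) :
    (∀ p : ℝ × ℝ, (D.combo i j p).comp (((D.aT i j m)⁻¹ : V ≃ₗ[ℝ] V) : V →ₗ[ℝ] V)
      = D.combo i j (diter (D.root j (D.coroot i)) (D.root i (D.coroot j)) m true p)) ∧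
    (∀ p : ℝ × ℝ, (D.combo i j p).comp (((D.aS i j m)⁻¹ : V ≃ₗ[ℝ] V) : V →ₗ[ℝ] V)
      = D.combo i j (diter (D.root j (D.coroot i)) (D.root i (D.coroot j)) m false p)) := by
  induction m with
  | zero =>
    constructor <;> intro p <;>
      simp [aT_zero, aS_zero, diter_zero, LinearMap.comp_id]
  | succ m ih =>
    constructor <;> intro p
    · rw [aT_succ, mul_inv_rev, D.refl_inv j, coe_mul_eq_comp, ← LinearMap.comp_assoc,
        D.combo_comp_refl_j i j p, ih.2, diter_succ]
      norm_num
    · rw [aS_succ, mul_inv_rev, D.refl_inv i, coe_mul_eq_comp, ← LinearMap.comp_assoc,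
        D.combo_comp_refl_i i j p, ih.1, diter_succ]
      norm_num

lemma root_comp_aT_inv (m : ℕ) :
    ((D.root i).comp (((D.aT i j m)⁻¹ : V ≃ₗ[ℝ] V) : V →ₗ[ℝ] V))
      = D.combo i j (diter (D.root j (D.coroot i)) (D.root i (D.coroot j)) m true (1, 0)) := by
  have h := (D.combo_comp_inv i j m).1 (1, 0)
  have hc : D.combo i j ((1 : ℝ), (0 : ℝ)) = D.root i := by
    ext v; simp [combo_apply]
  rw [hc] at h
  exact h

end DihedralRoots
end KMDatum

namespace KMDatum
variable {V I : Type*} [AddCommGroup V] [Module ℝ V] (D : KMDatum V I)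

section DihedralLemma
variable (i j : I)

lemma rel_m0 {a b : ℝ} {m0 : ℕ}
    (hcase : (a = 0 ∧ b = 0 ∧ m0 = 2) ∨ (a = -1 ∧ b = -1 ∧ m0 = 3) ∨
      (a = -1 ∧ b = -2 ∧ m0 = 4) ∨ (a = -2 ∧ b = -1 ∧ m0 = 4) ∨
      (a = -1 ∧ b = -3 ∧ m0 = 6) ∨ (a = -3 ∧ b = -1 ∧ m0 = 6))
    (ha : D.root j (D.coroot i) = a) (hb : D.root i (D.coroot j) = b) :
    D.aT i j m0 = D.aS i j m0 := by
  rcases hcase with ⟨h1, h2, h3⟩ | ⟨h1, h2, h3⟩ | ⟨h1, h2, h3⟩ | ⟨h1, h2, h3⟩ |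
    ⟨h1, h2, h3⟩ | ⟨h1, h2, h3⟩ <;>
    subst h1 <;> subst h2 <;> subst h3 <;>
    refine LinearEquiv.ext fun v => ?_ <;>
    simp only [aT_succ, aS_succ, aT_zero, aS_zero, one_mul, mul_apply, refl_apply,
      map_sub, map_smul, smul_eq_mul, D.diag, ha, hb] <;>
    module

lemma aS_word_exists (m : ℕ) : ∃ l : List Bool, D.prodB i j l = D.aS i j m :=
  ⟨(D.aT_word i j m).2.choose, (D.aT_word i j m).2.choose_spec.2⟩

lemma aT_word_exists (m : ℕ) : ∃ l : List Bool, D.prodB i j l = D.aT i j m :=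
  ⟨(D.aT_word i j m).1.choose, (D.aT_word i j m).1.choose_spec.2⟩

lemma len2_shorten {m0 : ℕ} (h1 : 1 ≤ m0) (hrel : D.aT i j m0 = D.aS i j m0) (k : ℕ) :
    D.len2 i j (D.aT i j (m0 + 1 + k)) ≤ m0 - 1 + k ∧
    D.len2 i j (D.aS i j (m0 + 1 + k)) ≤ m0 - 1 + k := by
  induction k with
  | zero =>
    obtain ⟨m1, rfl⟩ : ∃ m1, m0 = m1 + 1 := ⟨m0 - 1, by omega⟩
    constructor
    · have h2 : D.aT i j (m1 + 1 + 1 + 0) = D.aS i j m1 := by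
        rw [Nat.add_zero, aT_succ, ← hrel, aT_succ_mul]
      rw [h2]
      have := D.len2_aS_le i j m1
      omega
    · have h2 : D.aS i j (m1 + 1 + 1 + 0) = D.aT i j m1 := by
        rw [Nat.add_zero, aS_succ, hrel, aS_succ_mul]
      rw [h2]
      have := D.len2_aT_le i j m1
      omega
  | succ k ih =>
    constructor
    · have h2 : D.aT i j (m0 + 1 + (k + 1)) = D.aS i j (m0 + 1 + k) * D.refl j := by
        rw [show m0 + 1 + (k + 1) = (m0 + 1 + k) + 1 by omega, aT_succ]
      rw [h2]
      have hle := D.len2_mul_single_le i j (D.aS_word_exists i j (m0 + 1 + k)) false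
      have hb : D.refl (bletter i j false) = D.refl j := rfl
      rw [hb] at hle
      omega
    · have h2 : D.aS i j (m0 + 1 + (k + 1)) = D.aT i j (m0 + 1 + k) * D.refl i := by
        rw [show m0 + 1 + (k + 1) = (m0 + 1 + k) + 1 by omega, aS_succ]
      rw [h2]
      have hle := D.len2_mul_single_le i j (D.aT_word_exists i j (m0 + 1 + k)) true
      have hb : D.refl (bletter i j true) = D.refl i := rfl
      rw [hb] at hle
      omega

lemma dl_finite_aT {m0 m : ℕ} (h1 : 1 ≤ m0) (hrel : D.aT i j m0 = D.aS i j m0)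
    (hm : D.len2 i j (D.aT i j m) = m)
    (hlen : D.len2 i j (D.aT i j m) ≤ D.len2 i j (D.aT i j m * D.refl i)) : m < m0 := by
  by_contra hge
  push_neg at hge
  rcases eq_or_lt_of_le hge with heq | hlt
  · rw [heq] at hrel h1
    obtain ⟨m1, rfl⟩ : ∃ m1, m = m1 + 1 := ⟨m - 1, by omega⟩
    have h2 : D.aT i j (m1 + 1) * D.refl i = D.aT i j m1 := by rw [hrel, aS_succ_mul]
    rw [h2] at hlen
    have := D.len2_aT_le i j m1
    omega
  · obtain ⟨k, rfl⟩ : ∃ k, m = m0 + 1 + k := ⟨m - m0 - 1, by omega⟩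
    have := (D.len2_shorten i j h1 hrel k).1
    omega

/-- The key dihedral lemma. -/
lemma dihedral_lemma (hij : i ≠ j) (x : V ≃ₗ[ℝ] V) (hx : ∃ l : List Bool, D.prodB i j l = x)
    (hlen : D.len2 i j x ≤ D.len2 i j (x * D.refl i)) :
    ∃ c₁ c₂ : ℝ, 0 ≤ c₁ ∧ 0 ≤ c₂ ∧
      (D.root i).comp ((x⁻¹ : V ≃ₗ[ℝ] V) : V →ₗ[ℝ] V) = c₁ • D.root i + c₂ • D.root j := by
  obtain ⟨l, hl, hp⟩ := D.len2_spec i j hx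
  obtain ⟨m, hm, hx'⟩ := D.prodB_normal_form i j l
  rw [hp] at hx'
  have haux : x = D.aT i j m ∨ (x = D.aS i j m ∧ 1 ≤ m) := by
    rcases hx' with h | h
    · exact Or.inl h
    · rcases Nat.eq_zero_or_pos m with h0 | h0
      · subst h0
        exact Or.inl (by rw [h, aS_zero, aT_zero])
      · exact Or.inr ⟨h, h0⟩
  rcases haux with hxa | ⟨hxa, h1m⟩
  swap
  · -- degenerate case : x = aS m with m ≥ 1 contradicts hlen
    exfalso
    obtain ⟨m1, rfl⟩ : ∃ m1, m = m1 + 1 := ⟨m - 1, by omega⟩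
    have hmm : D.len2 i j x = m1 + 1 := by
      have hle1 : D.len2 i j x ≤ m1 + 1 := by rw [hxa]; exact D.len2_aS_le i j _
      omega
    have h2 : x * D.refl i = D.aT i j m1 := by rw [hxa]; exact D.aS_succ_mul i j m1
    rw [h2] at hlen
    have := D.len2_aT_le i j m1
    omega
  -- main case : x = aT m, m = len2 x
  subst hxa
  have hmm : D.len2 i j (D.aT i j m) = m := by
    have hle1 : D.len2 i j (D.aT i j m) ≤ m := D.len2_aT_le i j m
    omega
  set a := D.root j (D.coroot i) with ha_def
  set b := D.root i (D.coroot j) with hb_def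
  have ha0 : a ≤ 0 := D.offdiag i j hij
  have hb0 : b ≤ 0 := D.offdiag j i hij.symm
  obtain ⟨na, hna⟩ := D.isInt i j
  obtain ⟨nb, hnb⟩ := D.isInt j i
  rw [← ha_def] at hna
  rw [← hb_def] at hnb
  have hna0 : na ≤ 0 := by
    have h := ha0; rw [hna] at h; exact_mod_cast h
  have hnb0 : nb ≤ 0 := by
    have h := hb0; rw [hnb] at h; exact_mod_cast h
  have hnn : 0 ≤ (diter a b m true (1, 0)).1 ∧ 0 ≤ (diter a b m true (1, 0)).2 := by
    rcases le_or_gt 4 (na * nb) with h4 | h4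
    · -- infinite case
      have h4' : (4 : ℝ) ≤ a * b := by
        rw [hna, hnb, ← Int.cast_mul]
        exact_mod_cast h4
      have hbase : dinv a b true (1, 0) := by
        refine ⟨by norm_num, by norm_num, ?_⟩
        simp only [if_true]
        norm_num
        linarith
      exact diter_nonneg ha0 hb0 h4' m true (1, 0) hbase
    · -- finite cases
      have hzero : na = 0 ↔ nb = 0 := by
        constructor <;> intro h
        · have h' : a = 0 := by rw [hna, h]; norm_num
          have h'' : b = 0 := (D.zero_iff i j).mp h'
          rw [hnb] at h''; exact_mod_cast h''
        · have h' : b = 0 := by rw [hnb, h]; norm_num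
          have h'' : a = 0 := (D.zero_iff i j).mpr h'
          rw [hna] at h''; exact_mod_cast h''
      have hcase : (na = 0 ∧ nb = 0) ∨ (na = -1 ∧ nb = -1) ∨ (na = -1 ∧ nb = -2) ∨
          (na = -2 ∧ nb = -1) ∨ (na = -1 ∧ nb = -3) ∨ (na = -3 ∧ nb = -1) := by
        have hna3 : -3 ≤ na := by
          by_contra hc
          push_neg at hc
          rcases eq_or_lt_of_le hnb0 with h | h
          · have := hzero.mpr (by omega); omega
          · nlinarith
        have hnb3 : -3 ≤ nb := by
          by_contra hc
          push_neg at hc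
          rcases eq_or_lt_of_le hna0 with h | h
          · have := hzero.mp (by omega); omega
          · nlinarith
        interval_cases na <;> interval_cases nb <;> omega
      have key : ∀ m0 : ℕ, 1 ≤ m0 → D.aT i j m0 = D.aS i j m0 →
          (∀ m' < m0, 0 ≤ (diter a b m' true (1, 0)).1 ∧ 0 ≤ (diter a b m' true (1, 0)).2) →
          0 ≤ (diter a b m true (1, 0)).1 ∧ 0 ≤ (diter a b m true (1, 0)).2 := by
        intro m0 h1 hrel hcone
        exact hcone m (D.dl_finite_aT i j h1 hrel hmm hlen)
      rcases hcase with ⟨h1, h2⟩ | ⟨h1, h2⟩ | ⟨h1, h2⟩ | ⟨h1, h2⟩ | ⟨h1, h2⟩ | ⟨h1, h2⟩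
      · have hav : a = 0 := by rw [hna, h1]; norm_num
        have hbv : b = 0 := by rw [hnb, h2]; norm_num
        refine key 2 (by norm_num) (D.rel_m0 i j (by norm_num) hav hbv) ?_
        intro m' hm'
        simp only [hav, hbv]
        interval_cases m' <;> norm_num [diter, dstep]
      · have hav : a = -1 := by rw [hna, h1]; norm_num
        have hbv : b = -1 := by rw [hnb, h2]; norm_num
        refine key 3 (by norm_num) (D.rel_m0 i j (by norm_num) hav hbv) ?_
        intro m' hm'
        simp only [hav, hbv]
        interval_cases m' <;> norm_num [diter, dstep]
      · have hav : a = -1 := by rw [hna, h1]; norm_num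
        have hbv : b = -2 := by rw [hnb, h2]; norm_num
        refine key 4 (by norm_num) (D.rel_m0 i j (by norm_num) hav hbv) ?_
        intro m' hm'
        simp only [hav, hbv]
        interval_cases m' <;> norm_num [diter, dstep]
      · have hav : a = -2 := by rw [hna, h1]; norm_num
        have hbv : b = -1 := by rw [hnb, h2]; norm_num
        refine key 4 (by norm_num) (D.rel_m0 i j (by norm_num) hav hbv) ?_
        intro m' hm'
        simp only [hav, hbv]
        interval_cases m' <;> norm_num [diter, dstep]
      · have hav : a = -1 := by rw [hna, h1]; norm_num
        have hbv : b = -3 := by rw [hnb, h2]; norm_num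
        refine key 6 (by norm_num) (D.rel_m0 i j (by norm_num) hav hbv) ?_
        intro m' hm'
        simp only [hav, hbv]
        interval_cases m' <;> norm_num [diter, dstep]
      · have hav : a = -3 := by rw [hna, h1]; norm_num
        have hbv : b = -1 := by rw [hnb, h2]; norm_num
        refine key 6 (by norm_num) (D.rel_m0 i j (by norm_num) hav hbv) ?_
        intro m' hm'
        simp only [hav, hbv]
        interval_cases m' <;> norm_num [diter, dstep]
  exact ⟨(diter a b m true (1, 0)).1, (diter a b m true (1, 0)).2, hnn.1, hnn.2,
    by rw [root_comp_aT_inv]; rfl⟩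

end DihedralLemma
end KMDatum

namespace KMDatum
variable {V I : Type*} [AddCommGroup V] [Module ℝ V] [Fintype I] (D : KMDatum V I)

/-- `f` is a nonnegative combination of the simple roots. -/
noncomputable def IsPos (f : V →ₗ[ℝ] ℝ) : Prop :=
  ∃ c : I → ℝ, (∀ m, 0 ≤ c m) ∧ f = ∑ m, c m • D.root m

lemma isPos_root (i : I) : D.IsPos (D.root i) := by
  classical
  refine ⟨fun m => if m = i then 1 else 0, fun m => by dsimp only; split <;> norm_num, ?_⟩
  simp [ite_smul]

lemma isPos_comb {f g : V →ₗ[ℝ] ℝ} {c₁ c₂ : ℝ} (hf : D.IsPos f) (hg : D.IsPos g)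
    (h1 : 0 ≤ c₁) (h2 : 0 ≤ c₂) : D.IsPos (c₁ • f + c₂ • g) := by
  obtain ⟨c, hc, rfl⟩ := hf
  obtain ⟨d, hd, rfl⟩ := hg
  refine ⟨fun m => c₁ * c m + c₂ * d m,
    fun m => add_nonneg (mul_nonneg h1 (hc m)) (mul_nonneg h2 (hd m)), ?_⟩
  rw [Finset.smul_sum, Finset.smul_sum, ← Finset.sum_add_distrib]
  refine Finset.sum_congr rfl fun m _ => ?_
  rw [add_smul, smul_smul, smul_smul]

lemma isPos_pos_on_Cf {f : V →ₗ[ℝ] ℝ} (hf : D.IsPos f) (hne : f ≠ 0) :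
    ∀ u ∈ D.Cf, 0 < f u := by
  obtain ⟨c, hc, rfl⟩ := hf
  intro u hu
  have hex : ∃ m, c m ≠ 0 := by
    by_contra h
    push_neg at h
    exact hne (by simp [h])
  obtain ⟨m0, hm0⟩ := hex
  rw [LinearMap.sum_apply]
  refine Finset.sum_pos' (fun m _ => ?_) ⟨m0, Finset.mem_univ m0, ?_⟩
  · rw [LinearMap.smul_apply, smul_eq_mul]
    exact mul_nonneg (hc m) (hu m).le
  · rw [LinearMap.smul_apply, smul_eq_mul]
    exact mul_pos (lt_of_le_of_ne (hc m0) (Ne.symm hm0)) (hu m0)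

/-- KEY LEMMA (Humphreys 5.4): if `k` is not a right descent of `v` then
`α_k ∘ v⁻¹` is a nonnegative combination of simple roots. -/
theorem key_pos : ∀ (n : ℕ) (v : V ≃ₗ[ℝ] V), v ∈ D.Wv → D.len v = n → ∀ k : I,
    D.len v ≤ D.len (v * D.refl k) →
    D.IsPos ((D.root k).comp ((v⁻¹ : V ≃ₗ[ℝ] V) : V →ₗ[ℝ] V)) := by
  intro n
  induction n using Nat.strong_induction_on with
  | _ n ih =>
  intro v hv hn k hk
  rcases eq_or_ne v 1 with rfl | hne
  · have : ((1 : V ≃ₗ[ℝ] V)⁻¹ : V ≃ₗ[ℝ] V) = (1 : V ≃ₗ[ℝ] V) := inv_one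
    rw [this]
    have : (D.root k).comp (((1 : V ≃ₗ[ℝ] V) : V ≃ₗ[ℝ] V) : V →ₗ[ℝ] V) = D.root k := by
      ext u; rfl
    rw [this]
    exact D.isPos_root k
  obtain ⟨j, hj⟩ := D.exists_last_letter hv hne
  have hkj : k ≠ j := by
    intro h
    rw [h] at hk
    omega
  -- the minimisation set
  set T := {t : ℕ | ∃ u x : V ≃ₗ[ℝ] V, u ∈ D.Wv ∧ (∃ bl : List Bool, D.prodB k j bl = x) ∧
    v = u * x ∧ D.len u = t ∧ t + D.len2 k j x = D.len v} with hT
  have hTne : (D.len v - 1) ∈ T := by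
    refine ⟨v * D.refl j, D.refl j, D.Wv.mul_mem hv (D.refl_mem_Wv j),
      ⟨[false], by rw [prodB_singleton]; rfl⟩, by rw [mul_assoc, D.refl_mul_self, mul_one], by omega, ?_⟩
    have hle : D.len2 k j (D.refl j) ≤ 1 := D.len2_le_of_word k j (l := [false]) (by rw [prodB_singleton]; rfl)
    have hge : D.len2 k j (D.refl j) ≠ 0 := by
      intro h0
      exact D.refl_ne_one j (D.eq_one_of_len2_eq_zero k j ⟨[false], by rw [prodB_singleton]; rfl⟩ h0)
    omega
  obtain ⟨u, x, hu, hxw, hvux, hlu, hsum⟩ : sInf T ∈ T := Nat.sInf_mem ⟨_, hTne⟩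
  have hxWv : x ∈ D.Wv := by
    obtain ⟨bl, hbl⟩ := hxw
    rw [← hbl]
    exact D.prodB_mem_Wv k j bl
  -- claim 1 : no single-letter left extension of x decreases u
  have claim1 : ∀ b : Bool, D.len u ≤ D.len (u * D.refl (bletter k j b)) := by
    intro b
    by_contra hlt
    push_neg at hlt
    set r := D.refl (bletter k j b) with hr
    have hu' : u * r ∈ D.Wv := D.Wv.mul_mem hu (D.refl_mem_Wv _)
    have hx' : ∃ bl : List Bool, D.prodB k j bl = r * x := by
      obtain ⟨bl, hbl⟩ := hxw
      exact ⟨b :: bl, by rw [prodB_cons, hbl]⟩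
    have hx'Wv : r * x ∈ D.Wv := D.Wv.mul_mem (D.refl_mem_Wv _) hxWv
    have hvux' : v = (u * r) * (r * x) := by
      rw [mul_assoc, ← mul_assoc r r x, D.refl_mul_self, one_mul, hvux]
    have hlen1 : D.len v ≤ D.len (u * r) + D.len2 k j (r * x) := by
      calc D.len v = D.len ((u * r) * (r * x)) := by rw [← hvux']
      _ ≤ D.len (u * r) + D.len (r * x) := D.len_mul_le hu' hx'Wv
      _ ≤ D.len (u * r) + D.len2 k j (r * x) := by
          have := D.len_le_len2 k j hx'
          omega
    have hlen2 : D.len2 k j (r * x) ≤ D.len2 k j x + 1 := D.len2_single_mul_le k j hxw b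
    have hmem : D.len (u * r) ∈ T := by
      refine ⟨u * r, r * x, hu', hx', hvux', rfl, ?_⟩
      omega
    have := Nat.sInf_le hmem
    omega
  -- claim 2 : k is not a right descent of x in the dihedral group
  have claim2 : D.len2 k j x ≤ D.len2 k j (x * D.refl k) := by
    by_contra hlt
    push_neg at hlt
    have hxk : ∃ bl : List Bool, D.prodB k j bl = x * D.refl k := by
      obtain ⟨bl, hbl⟩ := hxw
      exact ⟨bl ++ [true], by rw [prodB_append, hbl, prodB_singleton]; rfl⟩
    have h1 : D.len (v * D.refl k) ≤ D.len u + D.len2 k j (x * D.refl k) := by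
      calc D.len (v * D.refl k) = D.len (u * (x * D.refl k)) := by rw [hvux, mul_assoc]
      _ ≤ D.len u + D.len (x * D.refl k) :=
          D.len_mul_le hu (D.Wv.mul_mem hxWv (D.refl_mem_Wv k))
      _ ≤ D.len u + D.len2 k j (x * D.refl k) := by
          have := D.len_le_len2 k j hxk
          omega
    omega
  -- claim 3 : x ≠ 1, hence len u < len v
  have claim3 : x ≠ 1 := by
    intro h1
    rw [h1, mul_one] at hvux
    have := claim1 false
    have hbj : bletter k j false = j := rfl
    rw [hbj, ← hvux] at this
    omega
  have hx2pos : D.len2 k j x ≠ 0 := fun h0 => claim3 (D.eq_one_of_len2_eq_zero k j hxw h0)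
  have hulv : D.len u < D.len v := by omega
  -- apply the induction hypothesis to u at letters k and j
  have ihk := ih (D.len u) (by omega) u hu rfl k (by
    have := claim1 true
    have hbk : bletter k j true = k := rfl
    rwa [hbk] at this)
  have ihj := ih (D.len u) (by omega) u hu rfl j (by
    have := claim1 false
    have hbj : bletter k j false = j := rfl
    rwa [hbj] at this)
  -- apply the dihedral lemma to x
  obtain ⟨c₁, c₂, hc₁, hc₂, hdl⟩ := D.dihedral_lemma k j hkj x hxw claim2
  -- combine
  have hvinv : (v⁻¹ : V ≃ₗ[ℝ] V) = x⁻¹ * u⁻¹ := by rw [hvux, mul_inv_rev]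
  have hcomp : (D.root k).comp ((v⁻¹ : V ≃ₗ[ℝ] V) : V →ₗ[ℝ] V)
      = c₁ • ((D.root k).comp ((u⁻¹ : V ≃ₗ[ℝ] V) : V →ₗ[ℝ] V))
        + c₂ • ((D.root j).comp ((u⁻¹ : V ≃ₗ[ℝ] V) : V →ₗ[ℝ] V)) := by
    rw [hvinv, coe_mul_eq_comp, ← LinearMap.comp_assoc, hdl]
    rw [LinearMap.add_comp, LinearMap.smul_comp, LinearMap.smul_comp]
  rw [hcomp]
  exact D.isPos_comb ihk ihj hc₁ hc₂

/-- consequence : a left descent makes the root negative on the chamber. -/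
lemma root_neg_on_Cf {g : V ≃ₗ[ℝ] V} (hg : g ∈ D.Wv) (k : I)
    (h : D.len (D.refl k * g) ≤ D.len g) : ∀ u ∈ D.Cf, D.root k (g u) < 0 := by
  have hkg : D.refl k * g ∈ D.Wv := D.Wv.mul_mem (D.refl_mem_Wv k) hg
  set v₁ := g⁻¹ * D.refl k with hv₁
  have hv₁Wv : v₁ ∈ D.Wv := D.Wv.mul_mem (D.Wv.inv_mem hg) (D.refl_mem_Wv k)
  have hv₁inv : (v₁⁻¹ : V ≃ₗ[ℝ] V) = D.refl k * g := by
    rw [hv₁, mul_inv_rev, inv_inv, D.refl_inv]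
  have hlen1 : D.len v₁ = D.len (D.refl k * g) := by
    rw [← D.len_inv hv₁Wv, hv₁inv]
  have hlen2 : D.len (v₁ * D.refl k) = D.len g := by
    have : v₁ * D.refl k = g⁻¹ := by rw [hv₁, mul_assoc, D.refl_mul_self, mul_one]
    rw [this, D.len_inv hg]
  have hkey := D.key_pos (D.len v₁) v₁ hv₁Wv rfl k (by omega)
  rw [hv₁inv] at hkey
  have hfne : (D.root k).comp ((D.refl k * g : V ≃ₗ[ℝ] V) : V →ₗ[ℝ] V) ≠ 0 := by
    intro h0
    have h2 : (D.root k).comp ((D.refl k * g : V ≃ₗ[ℝ] V) : V →ₗ[ℝ] V)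
        ((D.refl k * g)⁻¹ (D.coroot k)) = D.root k (D.coroot k) := by
      simp only [LinearMap.comp_apply, LinearEquiv.coe_coe]
      congr 1
      exact (D.refl k * g).apply_symm_apply (D.coroot k)
    rw [h0, D.diag k] at h2
    norm_num at h2
  have hpos := D.isPos_pos_on_Cf hkey hfne
  intro u hu
  have := hpos u hu
  simp only [LinearMap.comp_apply, LinearEquiv.coe_coe, mul_apply] at this
  rw [D.root_comp_refl_self k (g u)] at this
  linarith

/-- fundamental domain : an element of `W^v` mapping a point of `C_f^v` into `C_f^v` is `1`. -/
lemma eq_one_of_mapsCf {g : V ≃ₗ[ℝ] V} (hg : g ∈ D.Wv) {x : V} (hx : x ∈ D.Cf)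
    (hgx : g x ∈ D.Cf) : g = 1 := by
  by_contra hne
  obtain ⟨l, hl, hp⟩ := D.len_spec hg
  cases l with
  | nil => exact hne (by simpa using hp.symm)
  | cons k t =>
    have hgt : g = D.refl k * (t.map D.refl).prod := by
      rw [← hp]; simp
    have htWv : (t.map D.refl).prod ∈ D.Wv := D.word_mem_Wv t
    have h1 : D.refl k * g = (t.map D.refl).prod := by
      rw [hgt, ← mul_assoc, D.refl_mul_self, one_mul]
    have h2 : D.len (D.refl k * g) ≤ D.len g := by
      rw [h1]
      have : D.len ((t.map D.refl).prod) ≤ t.length := by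
        refine D.len_le_of_word rfl |>.trans ?_
        simp
      simp at hl
      omega
    have := D.root_neg_on_Cf hg k h2 x hx
    exact absurd (hgx k) (by linarith)

end KMDatum

namespace KMDatum
variable {V I : Type*} [AddCommGroup V] [Module ℝ V] [Fintype I] (D : KMDatum V I)

lemma Cf_nonempty [FiniteDimensional ℝ V] : ∃ v, v ∈ D.Cf := by
  classical
  set S : Submodule ℝ (Module.Dual ℝ V) := Submodule.span ℝ (Set.range D.root) with hS
  set b : Module.Basis I ℝ S := Module.Basis.span D.indep_root with hb
  obtain ⟨S', hcompl⟩ := Submodule.exists_isCompl S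
  set proj : Module.Dual ℝ V →ₗ[ℝ] S := Submodule.linearProjOfIsCompl S S' hcompl with hproj
  set G₀ : S →ₗ[ℝ] ℝ := Module.Basis.constr b ℝ (fun _ => (1 : ℝ)) with hG₀
  set G : Module.Dual ℝ (Module.Dual ℝ V) := G₀.comp proj with hG
  set v : V := (Module.evalEquiv ℝ V).symm G with hv
  refine ⟨v, fun k => ?_⟩
  have h1 : D.root k v = G (D.root k) := by
    rw [hv]
    exact Module.apply_evalEquiv_symm_apply ℝ V (D.root k) G
  have h4 : proj (D.root k) = b k := by
    have h5 : (D.root k : Module.Dual ℝ V) = ((b k : S) : Module.Dual ℝ V) := by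
      rw [hb, Module.Basis.span_apply]
    rw [h5]
    exact Submodule.linearProjOfIsCompl_apply_left hcompl (b k)
  rw [h1, hG, LinearMap.comp_apply, h4, hG₀, Module.Basis.constr_basis]
  norm_num

/-- The germ condition : `w` maps the germ at `μ` of `μ - C_f^v` into `C_f^v`. -/
def germP (μ : V) (w : V ≃ₗ[ℝ] V) : Prop :=
  ∀ u ∈ D.Cf, ∃ ε > (0 : ℝ), ∀ t : ℝ, 0 < t → t < ε → w (μ - t • u) ∈ D.Cf

lemma germP_unique [FiniteDimensional ℝ V] {μ : V} {w w' : V ≃ₗ[ℝ] V}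
    (hw : w ∈ D.Wv) (hw' : w' ∈ D.Wv) (hP : D.germP μ w) (hP' : D.germP μ w') : w = w' := by
  obtain ⟨u0, hu0⟩ := D.Cf_nonempty
  obtain ⟨ε1, hε1, h1⟩ := hP u0 hu0
  obtain ⟨ε2, hε2, h2⟩ := hP' u0 hu0
  set t := min ε1 ε2 / 2 with ht
  have ht0 : 0 < t := by positivity
  have ht1 : t < ε1 := by
    have : min ε1 ε2 ≤ ε1 := min_le_left _ _
    have h3 : 0 < min ε1 ε2 := lt_min hε1 hε2
    rw [ht]; linarith
  have ht2 : t < ε2 := by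
    have : min ε1 ε2 ≤ ε2 := min_le_right _ _
    have h3 : 0 < min ε1 ε2 := lt_min hε1 hε2
    rw [ht]; linarith
  have hx : w (μ - t • u0) ∈ D.Cf := h1 t ht0 ht1
  have hx' : w' (μ - t • u0) ∈ D.Cf := h2 t ht0 ht2
  have hg : (w' * w⁻¹) (w (μ - t • u0)) = w' (μ - t • u0) := by
    rw [mul_apply, inv_apply, w.symm_apply_apply]
  have hone : w' * w⁻¹ = 1 := by
    refine D.eq_one_of_mapsCf (D.Wv.mul_mem hw' (D.Wv.inv_mem hw)) hx ?_
    rw [hg]; exact hx'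
  have := mul_inv_eq_one.mp hone
  exact this.symm

lemma germP_of_max {μ : V} (hμCl : μ ∈ D.CfCl) {w : V ≃ₗ[ℝ] V} (hwWv : w ∈ D.Wv)
    (hwμ : w μ ∈ D.CfCl) (hmax : ∀ w' ∈ D.Wv, w' μ ∈ D.CfCl → D.len w' ≤ D.len w) :
    D.germP μ w := by
  classical
  intro u hu
  have hneg : ∀ i : I, D.root i (w μ) = 0 → D.root i (w u) < 0 := by
    intro i hzi
    have hmem : D.refl i * w ∈ D.Wv := D.Wv.mul_mem (D.refl_mem_Wv i) hwWv
    have hfix : (D.refl i * w) μ = w μ := by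
      rw [mul_apply, refl_apply, hzi, zero_smul, sub_zero]
    have hlen : D.len (D.refl i * w) ≤ D.len w :=
      hmax (D.refl i * w) hmem (by rw [hfix]; exact hwμ)
    exact D.root_neg_on_Cf hwWv i hlen u hu
  set F : Finset I := Finset.univ.filter (fun i => 0 < D.root i (w u)) with hF
  have hstrict : ∀ i ∈ F, 0 < D.root i (w μ) := by
    intro i hi
    rw [hF, Finset.mem_filter] at hi
    rcases lt_or_eq_of_le (hwμ i) with h | h
    · exact h
    · exact absurd (hneg i h.symm) (by linarith [hi.2])
  by_cases hFne : F.Nonempty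
  · refine ⟨F.inf' hFne (fun i => D.root i (w μ) / D.root i (w u)), ?_, ?_⟩
    · rw [gt_iff_lt, Finset.lt_inf'_iff]
      intro i hi
      have h1 := hstrict i hi
      have h2 : 0 < D.root i (w u) := by
        rw [hF, Finset.mem_filter] at hi; exact hi.2
      positivity
    · intro t ht0 htε i
      rw [map_sub, map_smul, map_sub, map_smul, smul_eq_mul]
      by_cases hi : i ∈ F
      · have h2 : 0 < D.root i (w u) := by
          rw [hF, Finset.mem_filter] at hi; exact hi.2
        have h3 : t < D.root i (w μ) / D.root i (w u) :=
          lt_of_lt_of_le htε (Finset.inf'_le _ hi)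
        have := (lt_div_iff₀ h2).mp h3
        linarith
      · have h2 : D.root i (w u) ≤ 0 := by
          rw [hF, Finset.mem_filter] at hi
          push_neg at hi
          exact hi (Finset.mem_univ i)
        rcases lt_or_eq_of_le (hwμ i) with h | h
        · nlinarith
        · have := hneg i h.symm
          nlinarith
  · refine ⟨1, by norm_num, ?_⟩
    intro t ht0 _ i
    rw [map_sub, map_smul, map_sub, map_smul, smul_eq_mul]
    have h2 : D.root i (w u) ≤ 0 := by
      by_contra hc
      push_neg at hc
      exact hFne ⟨i, by rw [hF, Finset.mem_filter]; exact ⟨Finset.mem_univ i, hc⟩⟩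
    rcases lt_or_eq_of_le (hwμ i) with h | h
    · nlinarith
    · have := hneg i h.symm
      nlinarith

end KMDatum

/-- Lemma 3.2(2): with `C_z⁺ = (z, cplus) = pr_z(C_y)` and the negative local
chamber `C_y'' = (y, e) = pr_y(C_z⁺)`:
`d^W(C_z⁺, C_y) = τ_{μ⁺⁺}·w_{vv⁻¹·μ} ↔ d^W(C_z⁺, y) = μ⁺⁺ ∧ d^{*W}(C_y'', C_y) = w_{μ⁺⁺}⁺·w_{vv⁻¹·μ}`;
here `mupp = μ⁺⁺`, `wmin = w_{vv⁻¹·μ}` (minimal length sending `vv⁻¹·μ` into the closed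
fundamental chamber), and `wpp = w_{μ⁺⁺}⁺` (maximal length sending `μ⁺⁺` into it). -/
theorem dW_decomposition_spherical_right_codistance
    {V I : Type*} [AddCommGroup V] [Module ℝ V] [FiniteDimensional ℝ V] [Fintype I]
    (D : KMDatum V I) (Y : AddSubgroup V) (hY : D.Ycond Y)
    (z y mu : V) (hz : z ∈ Y) (hy : y ∈ Y) (hmuY : mu ∈ Y)
    (hmu : mu ∈ D.OpenTitsCone)
    (hzy : y - z ∈ D.OpenTitsCone)
    (c d vv cplus e : V ≃ₗ[ℝ] V)
    (hc : c ∈ D.Wv) (hd : d ∈ D.Wv) (hvv : vv ∈ D.Wv) (hcplus : cplus ∈ D.Wv)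
    (he : e ∈ D.Wv)
    (hproj : D.IsPrPos y d z cplus)
    (hproj' : D.IsPrNeg z cplus y e)
    (mupp : V) (hmupp : mupp ∈ D.CfCl ∧ ∃ w ∈ D.Wv, w mu = mupp)
    (wmin : V ≃ₗ[ℝ] V)
    (hwmin : wmin ∈ D.Wv ∧ wmin (vv⁻¹ mu) ∈ D.CfCl ∧
      ∀ w' ∈ D.Wv, w' (vv⁻¹ mu) ∈ D.CfCl → D.len wmin ≤ D.len w')
    (wpp : V ≃ₗ[ℝ] V)
    (hwpp : wpp ∈ D.Wv ∧ wpp mupp ∈ D.CfCl ∧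
      ∀ w' ∈ D.Wv, w' mupp ∈ D.CfCl → D.len w' ≤ D.len wpp) :
    (cplus.symm (y - z) = mupp ∧ cplus⁻¹ * d = wmin) ↔
      (cplus.symm (y - z) = mupp ∧ e⁻¹ * d = wpp * wmin) := by
  have main : cplus.symm (y - z) = mupp → e⁻¹ * cplus = wpp := by
    intro hA
    have hyz : y - z = cplus mupp := by rw [← hA, cplus.apply_symm_apply]
    have hP2 : D.germP mupp (e⁻¹ * cplus) := by
      intro u hu
      obtain ⟨ε, hε, hh⟩ := hproj' (cplus u) ⟨u, hu, rfl⟩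
      refine ⟨ε, hε, fun t ht1 ht2 => ?_⟩
      have h3 := hh t ht1 ht2
      have h4 : -((z + t • cplus u) - y) = cplus (mupp - t • u) := by
        rw [map_sub, map_smul, ← hyz]
        abel
      rw [h4] at h3
      obtain ⟨q, hq, hq2⟩ := h3
      have h5 : (e⁻¹ * cplus) (mupp - t • u) = q := by
        rw [KMDatum.mul_apply, ← hq2, KMDatum.inv_apply, e.symm_apply_apply]
      rw [h5]
      exact hq
    have hPp : D.germP mupp wpp := D.germP_of_max hmupp.1 hwpp.1 hwpp.2.1 hwpp.2.2
    exact D.germP_unique (D.Wv.mul_mem (D.Wv.inv_mem he) hcplus) hwpp.1 hP2 hPp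
  constructor
  · rintro ⟨hA, hB⟩
    refine ⟨hA, ?_⟩
    rw [← main hA, ← hB]
    group
  · rintro ⟨hA, hB⟩
    refine ⟨hA, ?_⟩
    have h1 : cplus⁻¹ * d = (e⁻¹ * cplus)⁻¹ * (e⁻¹ * d) := by group
    rw [h1, hB, main hA]
    group
end

section
/- Let (W, S) be a Coxeter system and let H be its Iwahori–Hecke algebra over the polynomial ring ℤ[q]: the free ℤ[q]-module with basis (T_w)_{w∈W}, with the unique associative ℤ[q]-algebra multiplication satisfying T_w·T_v = T_{wv} whenever ℓ(wv) = ℓ(w) + ℓ(v), and T_s·T_s = q·T_e + (q − 1)·T_s for s ∈ S. Then for all w, v ∈ W, writing T_w·T_v = Σ_{u∈W} a^u_{w,v}·T_u, each structure constant a^u_{w,v} ∈ ℤ[q] is a polynomial in q − 1 with coefficients in ℕ, i.e. a^u_{w,v} ∈ Σ_{n≥0} ℕ·(q−1)^n. -/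
open Polynomial

private lemma hecke_aux_M_mul
    {a c : Polynomial ℤ}
    (ha : a ∈ AddSubmonoid.closure
      (Set.range fun n : ℕ => ((Polynomial.X : Polynomial ℤ) - 1) ^ n))
    (hc : c ∈ AddSubmonoid.closure
      (Set.range fun n : ℕ => ((Polynomial.X : Polynomial ℤ) - 1) ^ n)) :
    a * c ∈ AddSubmonoid.closure
      (Set.range fun n : ℕ => ((Polynomial.X : Polynomial ℤ) - 1) ^ n) := by
  induction ha using AddSubmonoid.closure_induction with
  | mem x hx =>
    obtain ⟨m, rfl⟩ := hx
    induction hc using AddSubmonoid.closure_induction with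
    | mem y hy =>
      obtain ⟨k, rfl⟩ := hy
      exact AddSubmonoid.subset_closure ⟨m + k, by simp [pow_add]⟩
    | zero => simpa using AddSubmonoid.zero_mem _
    | add y z _ _ hy hz =>
      rw [mul_add]; exact AddSubmonoid.add_mem _ hy hz
  | zero => simpa using AddSubmonoid.zero_mem _
  | add x y _ _ hx hy =>
    rw [add_mul]; exact AddSubmonoid.add_mem _ hx hy

/-- Let `(W, S)` be a Coxeter system and `H` its Iwahori–Hecke algebra over
`ℤ[q]`: a `ℤ[q]`-algebra with basis `(T_w)_{w ∈ W}` (given by the basis `b`), unit `T_e = 1`,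
satisfying `T_w · T_v = T_{wv}` when `ℓ(wv) = ℓ(w) + ℓ(v)` and
`T_s · T_s = q·T_e + (q − 1)·T_s` for the simple reflections `s`. Then every structure
constant `a^u_{w,v} = (b.repr (T_w · T_v)) u ∈ ℤ[q]` is a polynomial in `q − 1` with
coefficients in `ℕ`, i.e. lies in the additive submonoid generated by the powers
`(q − 1)^n`. -/
theorem hecke_structure_constants_nonneg_in_q_sub_one
    {B W H : Type*} [Group W] (M : CoxeterMatrix B) (cs : CoxeterSystem M W)
    [Ring H] [Algebra (Polynomial ℤ) H]
    (b : Module.Basis W (Polynomial ℤ) H)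
    (hone : b 1 = 1)
    (hmul : ∀ w v : W, cs.length (w * v) = cs.length w + cs.length v →
      b w * b v = b (w * v))
    (hquad : ∀ i : B, b (cs.simple i) * b (cs.simple i) =
      (Polynomial.X : Polynomial ℤ) • b 1 +
        ((Polynomial.X : Polynomial ℤ) - 1) • b (cs.simple i)) :
    ∀ w v u : W, b.repr (b w * b v) u ∈
      AddSubmonoid.closure (Set.range fun n : ℕ => ((Polynomial.X : Polynomial ℤ) - 1) ^ n) := by
  set Mc : AddSubmonoid (Polynomial ℤ) :=
    AddSubmonoid.closure (Set.range fun n : ℕ => ((Polynomial.X : Polynomial ℤ) - 1) ^ n)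
    with hMc
  classical
  have h1M : (1 : Polynomial ℤ) ∈ Mc :=
    AddSubmonoid.subset_closure ⟨0, pow_zero _⟩
  have hXm1 : ((Polynomial.X : Polynomial ℤ) - 1) ∈ Mc :=
    AddSubmonoid.subset_closure ⟨1, pow_one _⟩
  have hXM : (Polynomial.X : Polynomial ℤ) ∈ Mc := by
    have := Mc.add_mem hXm1 h1M
    simpa using this
  -- the additive submonoid of elements all of whose coordinates lie in Mc
  let P : AddSubmonoid H :=
    { carrier := {x | ∀ u : W, b.repr x u ∈ Mc}
      add_mem' := fun hx hy u => by
        rw [map_add, Finsupp.add_apply]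
        exact Mc.add_mem (hx u) (hy u)
      zero_mem' := fun u => by
        rw [map_zero, Finsupp.zero_apply]
        exact Mc.zero_mem }
  have hP_basis : ∀ u : W, b u ∈ P := by
    intro u u'
    rw [b.repr_self, Finsupp.single_apply]
    split
    · exact h1M
    · exact Mc.zero_mem
  have hP_smul : ∀ (c : Polynomial ℤ) (x : H), c ∈ Mc → x ∈ P → c • x ∈ P := by
    intro c x hc hx u
    rw [map_smul, Finsupp.smul_apply, smul_eq_mul]
    exact hecke_aux_M_mul hc (hx u)
  -- multiplication by a simple generator preserves P
  have hsb : ∀ (i : B) (u : W), b (cs.simple i) * b u ∈ P := by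
    intro i u
    rcases cs.length_simple_mul u i with h | h
    · have : b (cs.simple i) * b u = b (cs.simple i * u) := by
        apply hmul
        rw [cs.length_simple]
        omega
      rw [this]
      exact hP_basis _
    · -- descent case
      set u' := cs.simple i * u with hu'
      have hsu' : cs.simple i * u' = u := by
        rw [hu', ← mul_assoc, cs.simple_mul_simple_self, one_mul]
      have hlen : cs.length (cs.simple i * u') = cs.length (cs.simple i) + cs.length u' := by
        rw [hsu', cs.length_simple]
        omega
      have hbu : b u = b (cs.simple i) * b u' := by
        rw [hmul _ _ hlen, hsu']
      have key : b (cs.simple i) * b u =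
          (Polynomial.X : Polynomial ℤ) • b u' +
            ((Polynomial.X : Polynomial ℤ) - 1) • b u := by
        calc b (cs.simple i) * b u
            = b (cs.simple i) * b (cs.simple i) * b u' := by rw [hbu, mul_assoc]
          _ = ((Polynomial.X : Polynomial ℤ) • b 1 +
                ((Polynomial.X : Polynomial ℤ) - 1) • b (cs.simple i)) * b u' := by
              rw [hquad]
          _ = (Polynomial.X : Polynomial ℤ) • (b 1 * b u') +
                ((Polynomial.X : Polynomial ℤ) - 1) • (b (cs.simple i) * b u') := by
              rw [add_mul, smul_mul_assoc, smul_mul_assoc]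
          _ = (Polynomial.X : Polynomial ℤ) • b u' +
                ((Polynomial.X : Polynomial ℤ) - 1) • b u := by
              rw [hone, one_mul, ← hbu]
      rw [key]
      exact P.add_mem (hP_smul _ _ hXM (hP_basis u')) (hP_smul _ _ hXm1 (hP_basis u))
  have hL : ∀ (i : B) (x : H), x ∈ P → b (cs.simple i) * x ∈ P := by
    intro i x hx
    have hrepr : x = ((b.repr x).sum fun u c => c • b u) := by
      conv_lhs => rw [← b.linearCombination_repr x]
      rfl
    rw [hrepr, Finsupp.mul_sum]
    apply AddSubmonoid.sum_mem
    intro u _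
    dsimp only
    rw [mul_smul_comm]
    exact hP_smul _ _ (hx u) (hsb i u)
  suffices key : ∀ (n : ℕ) (w v : W), cs.length w = n → b w * b v ∈ P by
    intro w v u
    exact key (cs.length w) w v rfl u
  intro n
  induction n using Nat.strong_induction_on with
  | _ n ih =>
    intro w v hw
    rcases eq_or_ne w 1 with rfl | hne
    · rw [hone, one_mul]
      exact hP_basis v
    · obtain ⟨i, hi⟩ := cs.exists_leftDescent_of_ne_one hne
      rw [cs.isLeftDescent_iff] at hi
      set w' := cs.simple i * w with hw'
      have hsw' : cs.simple i * w' = w := by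
        rw [hw', ← mul_assoc, cs.simple_mul_simple_self, one_mul]
      have hlen : cs.length (cs.simple i * w') = cs.length (cs.simple i) + cs.length w' := by
        rw [hsw', cs.length_simple]
        omega
      have hbw : b w = b (cs.simple i) * b w' := by
        rw [hmul _ _ hlen, hsw']
      rw [hbw, mul_assoc]
      exact hL i _ (ih (cs.length w') (by omega) w' v rfl)
end
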